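/- arXiv:2402.06478 — 7 statements merged into one kernel-verified Lean document; each statement's English description precedes it below -/
import Mathlib

section
/- Let x, y be complex numbers with 0 < arg x < arg y < π/2 and let 0 < α < β be reals. Then arg(x + y) < arg(α x + β y), where arg denotes the principal argument. -/
theorem stmt1 (x y : ℂ) (α β : ℝ)
    (hx : 0 < x.arg) (hxy : x.arg < y.arg) (hy : y.arg < Real.pi / 2)
    (hα : 0 < α) (hαβ : α < β) :
    (x + y).arg < ((α : ℂ) * x + (β : ℂ) * y).arg := by
  have hx2 : x.arg < Real.pi / 2 := hxy.trans hy
  have hxre : 0 < x.re := by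
    rcases Complex.arg_lt_pi_div_two_iff.1 hx2 with h | h | h
    · exact h
    · have := Complex.arg_nonneg_iff.1 hx.le; linarith
    · simp [h] at hx
  have hyre : 0 < y.re := by
    rcases Complex.arg_lt_pi_div_two_iff.1 hy with h | h | h
    · exact h
    · have := Complex.arg_nonneg_iff.1 (hx.trans hxy).le; linarith
    · exfalso
      have := Complex.arg_nonneg_iff.1 hx.le
      rw [h] at hxy; simp at hxy; linarith
  have htx : 0 < Real.tan x.arg := Real.tan_pos_of_pos_of_lt_pi_div_two hx hx2
  have hty : 0 < Real.tan y.arg :=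
    Real.tan_pos_of_pos_of_lt_pi_div_two (hx.trans hxy) hy
  rw [Complex.tan_arg] at htx hty
  have hxim : 0 < x.im := by
    have := (div_pos_iff.1 htx); rcases this with ⟨h, _⟩ | ⟨_, h⟩ <;> linarith
  have hyim : 0 < y.im := by
    have := (div_pos_iff.1 hty); rcases this with ⟨h, _⟩ | ⟨_, h⟩ <;> linarith
  -- x.arg < y.arg gives cross inequality
  have hcross : x.im * y.re < y.im * x.re := by
    have hmono := Real.strictMonoOn_tan
      (a := x.arg) (b := y.arg)
      ⟨by linarith [Real.pi_pos], hx2⟩ ⟨by linarith [Real.pi_pos], hy⟩ hxy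
    rw [Complex.tan_arg, Complex.tan_arg] at hmono
    exact (div_lt_div_iff₀ hxre hyre).1 hmono
  set s := x + y with hs
  set t := (α : ℂ) * x + (β : ℂ) * y with ht
  have hsre : s.re = x.re + y.re := by simp [hs]
  have hsim : s.im = x.im + y.im := by simp [hs]
  have htre : t.re = α * x.re + β * y.re := by
    simp [ht, Complex.add_re, Complex.mul_re]
  have htim : t.im = α * x.im + β * y.im := by
    simp [ht, Complex.add_im, Complex.mul_im]
  have hsre' : 0 < s.re := by rw [hsre]; linarith
  have hsim' : 0 < s.im := by rw [hsim]; linarith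
  have htre' : 0 < t.re := by rw [htre]; nlinarith
  have htim' : 0 < t.im := by rw [htim]; nlinarith
  have hsarg : s.arg ∈ Set.Ioo (-(Real.pi / 2)) (Real.pi / 2) :=
    ⟨Complex.neg_pi_div_two_lt_arg_iff.2 (Or.inl hsre'),
     Complex.arg_lt_pi_div_two_iff.2 (Or.inl hsre')⟩
  have htarg : t.arg ∈ Set.Ioo (-(Real.pi / 2)) (Real.pi / 2) :=
    ⟨Complex.neg_pi_div_two_lt_arg_iff.2 (Or.inl htre'),
     Complex.arg_lt_pi_div_two_iff.2 (Or.inl htre')⟩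
  have htan : Real.tan s.arg < Real.tan t.arg := by
    rw [Complex.tan_arg, Complex.tan_arg, div_lt_div_iff₀ hsre' htre',
      hsre, hsim, htre, htim]
    nlinarith
  exact (Real.strictMonoOn_tan.lt_iff_lt hsarg htarg).1 htan
end

section
/- For θ ∈ (0, π/4] and any a with Im a < 0, Re(e^{iθ} ∫_{-1}^{1} √(p_a(t)) dt) ≠ 0. That is, the level set Σ_θ = {a ∈ ℂ \ [-1,1] : Re ∫_{[-1,1]} e^{iθ}√(p_a(z)) dz = 0} does not meet the open lower half-plane. -/
open Complex Set intervalIntegral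

noncomputable section

/-- `p_a(z) = (z - a)(z² - 1)`. -/
def pa (a z : ℂ) : ℂ := (z - a) * (z ^ 2 - 1)

theorem stmt6 (θ : ℝ) (hθ : θ ∈ Ioc (0:ℝ) (Real.pi / 4))
    (a : ℂ) (ha : a.im < 0)
    (q : ℝ → ℂ) (hqc : ContinuousOn q (Icc (-1:ℝ) 1))
    (hsq : ∀ t ∈ Icc (-1:ℝ) 1, (q t) ^ 2 = pa a (t : ℂ))
    (hnorm : ∀ t ∈ Icc (-1:ℝ) 1, pa a (t : ℂ) = 1 → q t = 1) :
    (Complex.exp (Complex.I * θ) * ∫ t in (-1:ℝ)..1, q t).re ≠ 0 := by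
  have hcos : 0 < Real.cos θ := by
    apply Real.cos_pos_of_mem_Ioo
    constructor
    · linarith [hθ.1, Real.pi_pos]
    · linarith [hθ.2, Real.pi_pos]
  have hsin : 0 < Real.sin θ := Real.sin_pos_of_pos_of_lt_pi hθ.1 (by linarith [hθ.2, Real.pi_pos])
  -- the key sign fact
  have hxy : ∀ t ∈ Ioo (-1:ℝ) 1, (q t).re * (q t).im < 0 := by
    intro t ht
    have hmem : t ∈ Icc (-1:ℝ) 1 := Ioo_subset_Icc_self ht
    have h1 : ((q t)^2).im = 2 * ((q t).re * (q t).im) := by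
      simp [sq, Complex.mul_im]; all_goals ring
    have h2 : (pa a (t:ℂ)).im = (-a.im) * (t^2 - 1) := by
      simp [pa, Complex.mul_im, Complex.mul_re, sq]; all_goals ring
    have h3 : t^2 - 1 < 0 := by nlinarith [ht.1, ht.2]
    have h4 : (pa a (t:ℂ)).im < 0 := by
      rw [h2]; nlinarith
    have := hsq t hmem
    rw [this, h2] at h1
    nlinarith
  set g : ℝ → ℝ := fun t => (Complex.exp (Complex.I * θ) * q t).re with hg
  have hcst : Complex.exp (Complex.I * θ) = Real.cos θ + Real.sin θ * Complex.I := by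
    rw [mul_comm, Complex.exp_mul_I]
    simp
  have hgval : ∀ t, g t = Real.cos θ * (q t).re - Real.sin θ * (q t).im := by
    intro t
    rw [hg]
    simp only [hcst]
    simp [add_mul, Complex.mul_re, Complex.cos_ofReal_re, Complex.sin_ofReal_re]
    all_goals ring
  have hgne : ∀ t ∈ Ioo (-1:ℝ) 1, g t ≠ 0 := by
    intro t ht h0
    have := hxy t ht
    rw [hgval t] at h0
    have hy2 : Real.cos θ * ((q t).re * (q t).im) = Real.sin θ * (q t).im ^ 2 := by
      linear_combination (q t).im * h0
    have h5 : Real.cos θ * ((q t).re * (q t).im) < 0 := mul_neg_of_pos_of_neg hcos this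
    have h6 : 0 ≤ Real.sin θ * (q t).im ^ 2 := mul_nonneg hsin.le (sq_nonneg _)
    linarith
  have hgc : ContinuousOn g (Icc (-1:ℝ) 1) :=
    Complex.continuous_re.comp_continuousOn (continuousOn_const.mul hqc)
  have hqint : IntervalIntegrable q MeasureTheory.volume (-1:ℝ) 1 := by
    apply ContinuousOn.intervalIntegrable
    rwa [uIcc_of_le (by norm_num)]
  have hgint : IntervalIntegrable g MeasureTheory.volume (-1:ℝ) 1 := by
    apply ContinuousOn.intervalIntegrable
    rwa [uIcc_of_le (by norm_num)]
  -- reduce to the real integral of g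
  have key : (Complex.exp (Complex.I * θ) * ∫ t in (-1:ℝ)..1, q t).re
      = ∫ t in (-1:ℝ)..1, g t := by
    rw [← intervalIntegral.integral_const_mul]
    exact (Complex.reCLM.intervalIntegral_comp_comm (hqint.const_mul _)).symm
  rw [key]
  -- constant sign of g on Ioo
  have h0mem : (0:ℝ) ∈ Ioo (-1:ℝ) 1 := by norm_num
  have hsign : (∀ t ∈ Ioo (-1:ℝ) 1, 0 < g t) ∨ (∀ t ∈ Ioo (-1:ℝ) 1, g t < 0) := by
    rcases lt_or_gt_of_ne (hgne 0 h0mem) with h | h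
    · right
      intro t ht
      by_contra hle
      push_neg at hle
      have hlt : 0 < g t := lt_of_le_of_ne hle (Ne.symm (hgne t ht))
      have hsub : uIcc (0:ℝ) t ⊆ Icc (-1:ℝ) 1 :=
        uIcc_subset_Icc (by norm_num) ⟨ht.1.le, ht.2.le⟩
      obtain ⟨s, hs, hs0⟩ := intermediate_value_uIcc (hgc.mono hsub) (by
        rw [mem_uIcc]; left; exact ⟨le_of_lt h, le_of_lt hlt⟩)
      have hsIoo : s ∈ Ioo (-1:ℝ) 1 := by
        rcases mem_uIcc.1 hs with ⟨h1, h2⟩ | ⟨h1, h2⟩ <;>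
          constructor <;> nlinarith [ht.1, ht.2]
      exact hgne s hsIoo hs0
    · left
      intro t ht
      by_contra hle
      push_neg at hle
      have hlt : g t < 0 := lt_of_le_of_ne hle (hgne t ht)
      have hsub : uIcc (0:ℝ) t ⊆ Icc (-1:ℝ) 1 :=
        uIcc_subset_Icc (by norm_num) ⟨ht.1.le, ht.2.le⟩
      obtain ⟨s, hs, hs0⟩ := intermediate_value_uIcc (hgc.mono hsub) (by
        rw [mem_uIcc]; right; exact ⟨le_of_lt hlt, le_of_lt h⟩)
      have hsIoo : s ∈ Ioo (-1:ℝ) 1 := by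
        rcases mem_uIcc.1 hs with ⟨h1, h2⟩ | ⟨h1, h2⟩ <;>
          constructor <;> nlinarith [ht.1, ht.2]
      exact hgne s hsIoo hs0
  rcases hsign with hpos | hneg
  · have := intervalIntegral.intervalIntegral_pos_of_pos_on hgint hpos (by norm_num)
    linarith
  · have : 0 < ∫ t in (-1:ℝ)..1, -g t :=
      intervalIntegral.intervalIntegral_pos_of_pos_on hgint.neg
        (fun t ht => by simpa using neg_pos.2 (hneg t ht)) (by norm_num)
    rw [intervalIntegral.integral_neg] at this
    linarith
end
end

section
/- Define f_{1,θ}(a) = e^{iθ} ∫_{[1,a]} √(p_a(t)) dt for a ∈ ℂ \ (-∞,-1], integrating along the straight segment from 1 to a with a fixed branch of the square root. Then f_{1,θ}(a) = (a-1)² g(a) where g is holomorphic on ℂ \ (-∞,-1] with g(1) ≠ 0. In particular a = 1 is a zero of f_{1,θ} of order exactly 2, so the level set {Re f_{1,θ} = 0} near a = 1 consists of two analytic arcs crossing orthogonally at 1 with tangent directions arg(a-1) = (-θ + kπ)/2, k = 0,1,2,3. -/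
/-!
Parametrizing the segment already writes `f_{1,θ}(a) = (a-1)² g(a)` with
`g(a) = i e^{iθ} ∫₀¹ √(t(1-t)) √(t(a-1)+2) dt`. For `a` off the ray, `t(a-1)+2` runs over the
segment from `2` to `a+1`, which stays in the slit plane (star-shaped about `2`), so `g` is
holomorphic there by differentiation under the integral sign; and
`g(1) = √2 (∫₀¹ √(t(1-t)) dt) e^{i(θ+π/2)} ≠ 0`. Hence `1` is a double zero of `f_{1,θ}`. On the
level set `Re f = 0` the argument of `f` is `π/2` modulo `π`, i.e.
`2 arg(a-1) + arg g(a) ≡ π/2 (mod π)`, and `arg g(a) → θ + π/2` as `a → 1`.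
-/

open Complex Set intervalIntegral

noncomputable section

/-- The ray `(-∞, -1]` viewed as a subset of `ℂ`. -/
def negRay : Set ℂ := {z : ℂ | z.im = 0 ∧ z.re ≤ -1}

/-- `f_{1,θ}(a) = e^{iθ} ∫_{[1,a]} √(p_a(t)) dt`, written after parametrizing the
segment as `i e^{iθ} (a-1)² ∫₀¹ √(t(1-t)) √(t(a-1)+2) dt` with principal square roots. -/
def fOne (θ : ℝ) (a : ℂ) : ℂ :=
  Complex.I * Complex.exp (Complex.I * θ) * (a - 1) ^ 2 *
    ∫ t in (0:ℝ)..1, (Real.sqrt (t * (1 - t)) : ℂ) * (((t : ℂ) * (a - 1) + 2) ^ ((1:ℂ)/2))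

open Filter Metric MeasureTheory Topology
open scoped Interval Real

section ParametricIntegral

variable {𝕜 E : Type*} [RCLike 𝕜] [NormedAddCommGroup E] [NormedSpace ℝ E] [NormedSpace 𝕜 E]

theorem differentiableOn_intervalIntegral_of_hasDerivAt {U : Set 𝕜} (hU : IsOpen U)
    {F F' : 𝕜 → ℝ → E} {a b : ℝ} (hF : ∀ z ∈ U, ContinuousOn (F z) [[a, b]])
    (hF' : ContinuousOn (Function.uncurry F') (U ×ˢ [[a, b]]))
    (hder : ∀ z ∈ U, ∀ t ∈ [[a, b]], HasDerivAt (F · t) (F' z t) z) :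
    DifferentiableOn 𝕜 (fun z => ∫ t in a..b, F z t) U := by
  intro z₀ hz₀
  obtain ⟨r, hr, hball⟩ := nhds_basis_closedBall.mem_iff.1 (hU.mem_nhds hz₀)
  obtain ⟨C, hC⟩ := ((isCompact_closedBall z₀ r).prod isCompact_uIcc).exists_bound_of_continuousOn
    (hF'.mono (prod_mono hball subset_rfl))
  have hΙ : Ι a b ⊆ [[a, b]] := uIoc_subset_uIcc
  refine (hasDerivAt_integral_of_dominated_loc_of_deriv_le (F' := F') (bound := fun _ => C)
    (ball_mem_nhds z₀ hr) ?_ ?_ ?_ ?_ intervalIntegrable_const ?_).2.differentiableAt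
    |>.differentiableWithinAt
  · filter_upwards [hU.mem_nhds hz₀] with z hz
    exact ((hF z hz).mono hΙ).aestronglyMeasurable measurableSet_uIoc
  · exact (hF z₀ hz₀).intervalIntegrable
  · exact ((hF'.uncurry_left z₀ hz₀).mono hΙ).aestronglyMeasurable measurableSet_uIoc
  · exact ae_of_all _ fun t ht z hz => hC (z, t) ⟨ball_subset_closedBall hz, hΙ ht⟩
  · exact ae_of_all _ fun t ht z hz => hder z (hball (ball_subset_closedBall hz)) t (hΙ ht)

end ParametricIntegral

section DoubleZero

variable {𝕜 : Type*} [NontriviallyNormedField 𝕜] {G : 𝕜 → 𝕜} {z₀ : 𝕜}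

theorem hasDerivAt_sub_sq_mul {z : 𝕜} (hG : DifferentiableAt 𝕜 G z) :
    HasDerivAt (fun w => (w - z₀) ^ 2 * G w) ((z - z₀) * (2 * G z + (z - z₀) * deriv G z)) z := by
  refine ((((hasDerivAt_id' z).sub_const z₀).fun_pow 2).fun_mul hG.hasDerivAt).congr_deriv ?_
  push_cast
  ring

theorem deriv_sub_sq_mul_at_self (hG : DifferentiableAt 𝕜 G z₀) :
    deriv (fun w => (w - z₀) ^ 2 * G w) z₀ = 0 := by
  simp [(hasDerivAt_sub_sq_mul hG).deriv]

theorem iteratedDeriv_two_sub_sq_mul_at_self [CompleteSpace 𝕜] (hG : AnalyticAt 𝕜 G z₀) :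
    iteratedDeriv 2 (fun w => (w - z₀) ^ 2 * G w) z₀ = 2 * G z₀ := by
  have hderiv : deriv (fun w => (w - z₀) ^ 2 * G w) =ᶠ[𝓝 z₀]
      fun z => (z - z₀) * (2 * G z + (z - z₀) * deriv G z) := by
    filter_upwards [hG.eventually_analyticAt] with z hz
    exact (hasDerivAt_sub_sq_mul hz.differentiableAt).deriv
  have hH : DifferentiableAt 𝕜 (fun z => 2 * G z + (z - z₀) * deriv G z) z₀ := by
    fun_prop
  rw [iteratedDeriv_succ, iteratedDeriv_one, hderiv.deriv_eq,
    (((hasDerivAt_id' z₀).sub_const z₀).fun_mul hH.hasDerivAt).deriv]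
  simp

end DoubleZero

theorem Complex.exists_int_arg_eq_of_re_eq_zero {w : ℂ} (hw : w ≠ 0) (hre : w.re = 0) :
    ∃ k : ℤ, arg w = π / 2 + k * π := by
  have him : w.im ≠ 0 := fun him => hw (Complex.ext hre him)
  rcases him.lt_or_gt with him | him
  · exact ⟨-1, by rw [arg_eq_neg_pi_div_two_iff.2 ⟨hre, him⟩]; push_cast; ring⟩
  · exact ⟨0, by rw [arg_eq_pi_div_two_iff.2 ⟨hre, him⟩]; simp⟩

theorem Complex.exists_int_abs_arg_sub_lt_of_re_pow_mul_eq_zero {g : ℂ → ℂ} {z₀ : ℂ} {φ : ℝ}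
    {n : ℕ} (hn : n ≠ 0) (hg : ContinuousAt g z₀) (hg₀ : g z₀ ≠ 0)
    (hφ : (arg (g z₀) : Real.Angle) = φ) {ε : ℝ} (hε : 0 < ε) :
    ∃ δ > 0, ∀ z, z ≠ z₀ → ‖z - z₀‖ < δ → ((z - z₀) ^ n * g z).re = 0 →
      ∃ k : ℤ, |arg (z - z₀) - (π / 2 - φ + k * π) / n| < ε := by
  set u : ℂ → ℂ := fun z => g z / g z₀
  have hu : ContinuousAt u z₀ := hg.div_const _
  have hu₀ : u z₀ = 1 := div_self hg₀
  have harg : ∀ᶠ z in 𝓝 z₀, |arg (u z)| < ε := by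
    have := (continuousAt_arg (hu₀ ▸ one_mem_slitPlane)).comp hu
    simpa [hu₀] using this.tendsto.eventually (eventually_abs_sub_lt _ hε)
  have hne : ∀ᶠ z in 𝓝 z₀, u z ≠ 0 := hu.eventually_ne (hu₀ ▸ one_ne_zero)
  obtain ⟨δ, hδ, hz⟩ := Metric.eventually_nhds_iff.1 (harg.and hne)
  refine ⟨δ, hδ, fun z hz₀ hzδ hre => ?_⟩
  obtain ⟨hargz, huz⟩ := hz (by rwa [dist_eq_norm])
  have hgz : g z = g z₀ * u z := by simp [u, mul_div_cancel₀ _ hg₀]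
  have hsub : z - z₀ ≠ 0 := sub_ne_zero.2 hz₀
  have hw : (z - z₀) ^ n * g z ≠ 0 := by
    rw [hgz]; exact mul_ne_zero (pow_ne_zero _ hsub) (mul_ne_zero hg₀ huz)
  obtain ⟨k, hk⟩ := exists_int_arg_eq_of_re_eq_zero hw hre
  have hangle : ((π / 2 + k * π : ℝ) : Real.Angle) = (n * arg (z - z₀) + φ + arg (u z) : ℝ) := by
    rw [← hk, hgz, arg_mul_coe_angle (pow_ne_zero _ hsub) (mul_ne_zero hg₀ huz),
      arg_mul_coe_angle hg₀ huz, arg_pow_coe_angle, hφ, Real.Angle.coe_add, Real.Angle.coe_add, Real.Angle.natCast_mul_eq_nsmul, add_assoc]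
  obtain ⟨m, hm⟩ := Real.Angle.angle_eq_iff_two_pi_dvd_sub.1 hangle
  refine ⟨k - 2 * m, ?_⟩
  have hn' : (0 : ℝ) < n := by positivity
  have : arg (z - z₀) - (π / 2 - φ + ((k - 2 * m : ℤ) : ℝ) * π) / n = -arg (u z) / n := by
    field_simp
    push_cast
    linarith
  rw [this, abs_div, abs_neg, abs_of_pos hn']
  exact (div_le_self (abs_nonneg _) (by exact_mod_cast Nat.one_le_iff_ne_zero.2 hn)).trans_lt hargz

theorem mem_negRay_compl_iff {a : ℂ} : a ∈ negRayᶜ ↔ a + 1 ∈ slitPlane := by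
  simp only [negRay, mem_compl_iff, mem_ofPred_eq, mem_slitPlane_iff]
  rw [add_re, add_im, one_re, one_im, add_zero, not_and_or, not_le, or_comm]
  exact or_congr (by constructor <;> intro h <;> linarith) Iff.rfl

theorem isOpen_negRay_compl : IsOpen negRayᶜ := by
  rw [show negRayᶜ = (· + 1) ⁻¹' slitPlane from Set.ext fun _ => mem_negRay_compl_iff]
  exact isOpen_slitPlane.preimage (continuous_add_const 1)

theorem one_mem_negRay_compl : (1 : ℂ) ∈ negRayᶜ :=
  mem_negRay_compl_iff.2 (by norm_num [mem_slitPlane_iff])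

theorem mem_slitPlane_of_mem_negRay_compl {a : ℂ} (ha : a ∈ negRayᶜ) {t : ℝ}
    (ht : t ∈ Icc (0 : ℝ) 1) : (t : ℂ) * (a - 1) + 2 ∈ slitPlane := by
  have := (starConvex_ofReal_slitPlane (two_pos : (0 : ℝ) < 2)).add_smul_sub_mem
    (mem_negRay_compl_iff.1 ha) ht.1 ht.2
  convert this using 1
  simp only [real_smul, ofReal_ofNat]
  ring

def fOneCofactor (θ : ℝ) (a : ℂ) : ℂ :=
  I * exp (I * θ) *
    ∫ t in (0:ℝ)..1, (√(t * (1 - t)) : ℂ) * ((t : ℂ) * (a - 1) + 2) ^ ((1 : ℂ) / 2)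

theorem fOne_eq_sq_mul_fOneCofactor (θ : ℝ) (a : ℂ) :
    fOne θ a = (a - 1) ^ 2 * fOneCofactor θ a := by
  rw [fOne, fOneCofactor]
  ring

theorem differentiableOn_fOneCofactor (θ : ℝ) : DifferentiableOn ℂ (fOneCofactor θ) negRayᶜ := by
  have hslit : ∀ p ∈ negRayᶜ ×ˢ [[(0 : ℝ), 1]], (p.2 : ℂ) * (p.1 - 1) + 2 ∈ slitPlane :=
    fun p hp => mem_slitPlane_of_mem_negRay_compl hp.1 (uIcc_of_le (zero_le_one' ℝ) ▸ hp.2)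
  refine (differentiableOn_intervalIntegral_of_hasDerivAt isOpen_negRay_compl
    (F' := fun z t => (√(t * (1 - t)) : ℂ) *
      ((1 / 2) * ((t : ℂ) * (z - 1) + 2) ^ ((1 : ℂ) / 2 - 1) * ((t : ℂ) * 1))) ?_ ?_ ?_).const_mul _
  · intro z hz
    refine (Continuous.continuousOn (by fun_prop)).mul ?_
    exact ((by fun_prop : Continuous fun t : ℝ => (t : ℂ) * (z - 1) + 2).continuousOn.cpow_const
      fun t ht => hslit (z, t) ⟨hz, ht⟩)
  · refine (Continuous.continuousOn (by fun_prop)).mul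
      ((continuousOn_const.mul ?_).mul (Continuous.continuousOn (by fun_prop)))
    exact (Continuous.continuousOn (by fun_prop)).cpow_const hslit
  · intro z hz t ht
    have hbase : HasDerivAt (fun z : ℂ => (t : ℂ) * (z - 1) + 2) ((t : ℂ) * 1) z :=
      (((hasDerivAt_id' z).sub_const 1).const_mul (t : ℂ)).add_const 2
    exact (hbase.cpow_const (hslit (z, t) ⟨hz, ht⟩)).const_mul _

theorem integral_sqrt_mul_one_sub_pos : 0 < ∫ t in (0:ℝ)..1, √(t * (1 - t)) := by
  refine intervalIntegral_pos_of_pos_on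
    ((by fun_prop : Continuous fun t : ℝ => √(t * (1 - t))).intervalIntegrable 0 1)
    (fun t ht => Real.sqrt_pos.2 (mul_pos ht.1 (by linarith [ht.2]))) zero_lt_one

theorem fOneCofactor_one (θ : ℝ) :
    fOneCofactor θ 1 =
      ((√2 * ∫ t in (0:ℝ)..1, √(t * (1 - t)) : ℝ) : ℂ) * exp ((θ + π / 2 : ℝ) * I) := by
  have hsqrt2 : (2 : ℂ) ^ ((1 : ℂ) / 2) = (√2 : ℝ) := by
    rw [Real.sqrt_eq_rpow, ofReal_cpow zero_le_two]
    norm_num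
  simp only [fOneCofactor, sub_self, mul_zero, zero_add, hsqrt2,
    intervalIntegral.integral_mul_const, intervalIntegral.integral_ofReal, ofReal_mul, ofReal_add,
    add_mul, Complex.exp_add, ofReal_div, ofReal_ofNat, exp_pi_div_two_mul_I]
  ring_nf

theorem fOneCofactor_one_ne_zero (θ : ℝ) : fOneCofactor θ 1 ≠ 0 := by
  rw [fOneCofactor_one]
  exact mul_ne_zero (ofReal_ne_zero.2 (by positivity [integral_sqrt_mul_one_sub_pos]))
    (exp_ne_zero _)

theorem arg_fOneCofactor_one (θ : ℝ) :
    (arg (fOneCofactor θ 1) : Real.Angle) = (θ + π / 2 : ℝ) := by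
  rw [fOneCofactor_one, arg_real_mul _ (by positivity [integral_sqrt_mul_one_sub_pos]),
    arg_exp_mul_I, Real.Angle.coe_toIocMod]

theorem stmt7_general (θ : ℝ) :
    -- factorization `f_{1,θ}(a) = (a-1)² g(a)` with `g` holomorphic and `g(1) ≠ 0`
    (∃ g : ℂ → ℂ, DifferentiableOn ℂ g negRayᶜ ∧
      (∀ a ∈ negRayᶜ, fOne θ a = (a - 1) ^ 2 * g a) ∧ g 1 ≠ 0) ∧
    -- `a = 1` is a zero of order exactly 2
    (fOne θ 1 = 0 ∧ deriv (fOne θ) 1 = 0 ∧ iteratedDeriv 2 (fOne θ) 1 ≠ 0) ∧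
    -- near `a = 1` the level set `{Re f_{1,θ} = 0}` has tangent directions
    -- `arg(a-1) = (-θ + kπ)/2`
    (∀ ε > (0:ℝ), ∃ δ > (0:ℝ), ∀ a ∈ negRayᶜ, a ≠ 1 → ‖a - 1‖ < δ →
      (fOne θ a).re = 0 →
      ∃ k : ℤ, |(a - 1).arg - (-θ + k * Real.pi) / 2| < ε) := by
  have hf : fOne θ = fun a => (a - 1) ^ 2 * fOneCofactor θ a :=
    funext (fOne_eq_sq_mul_fOneCofactor θ)
  have hg : DifferentiableOn ℂ (fOneCofactor θ) negRayᶜ := differentiableOn_fOneCofactor θ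
  have hg₁ : AnalyticAt ℂ (fOneCofactor θ) 1 :=
    hg.analyticAt (isOpen_negRay_compl.mem_nhds one_mem_negRay_compl)
  refine ⟨⟨fOneCofactor θ, hg, fun a _ => fOne_eq_sq_mul_fOneCofactor θ a,
    fOneCofactor_one_ne_zero θ⟩, ⟨by simp [hf], ?_, ?_⟩, fun ε hε => ?_⟩
  · rw [hf, deriv_sub_sq_mul_at_self hg₁.differentiableAt]
  · rw [hf, iteratedDeriv_two_sub_sq_mul_at_self hg₁]
    exact mul_ne_zero two_ne_zero (fOneCofactor_one_ne_zero θ)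
  obtain ⟨δ, hδ, hlevel⟩ := exists_int_abs_arg_sub_lt_of_re_pow_mul_eq_zero two_ne_zero
    hg₁.continuousAt (fOneCofactor_one_ne_zero θ) (arg_fOneCofactor_one θ) hε
  refine ⟨δ, hδ, fun a _ ha₁ haδ hre => ?_⟩
  obtain ⟨k, hk⟩ := hlevel a ha₁ haδ (by rwa [← fOne_eq_sq_mul_fOneCofactor])
  exact ⟨k, by convert hk using 3; push_cast; ring⟩

theorem stmt7 (θ : ℝ) (hθ : θ ∈ Ico (0:ℝ) (Real.pi / 2)) :
    -- factorization `f_{1,θ}(a) = (a-1)² g(a)` with `g` holomorphic and `g(1) ≠ 0`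
    (∃ g : ℂ → ℂ, DifferentiableOn ℂ g negRayᶜ ∧
      (∀ a ∈ negRayᶜ, fOne θ a = (a - 1) ^ 2 * g a) ∧ g 1 ≠ 0) ∧
    -- `a = 1` is a zero of order exactly 2
    (fOne θ 1 = 0 ∧ deriv (fOne θ) 1 = 0 ∧ iteratedDeriv 2 (fOne θ) 1 ≠ 0) ∧
    -- near `a = 1` the level set `{Re f_{1,θ} = 0}` has tangent directions
    -- `arg(a-1) = (-θ + kπ)/2`
    (∀ ε > (0:ℝ), ∃ δ > (0:ℝ), ∀ a ∈ negRayᶜ, a ≠ 1 → ‖a - 1‖ < δ →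
      (fOne θ a).re = 0 →
      ∃ k : ℤ, |(a - 1).arg - (-θ + k * Real.pi) / 2| < ε) :=
  stmt7_general θ
end
end

section
/- As a → ∞ one has (∫_{-1}^{1} e^{iθ} √(p_a(t)) dt)² ~ (π²/4) a e^{2iθ}. Consequently, any unbounded arc of the level set Σ_θ = {a : Re ∫_{-1}^{1} e^{iθ}√(p_a(t)) dt = 0} escapes to infinity in the asymptotic direction arg a → π - 2θ. -/
open Complex Set intervalIntegral Filter Topology

noncomputable section

/-!
Since `p_a(t) = a (1 - t²)(1 - t/a)`, a continuous branch of `√(p_a)` on `[-1, 1]` is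
`±√a · √(1 - t²) · √(1 - t/a)`, so `(∫ √(p_a))² = a J(1/a)²` with
`J(u) = ∫ √(1 - t²) √(1 - t u)`. The function `J` is `2`-Lipschitz near `0` with `J(0) = π/2`,
which gives the asymptotics. On `Σ_θ` the square `e^{2iθ} a J(1/a)²` is a negative real, so `a` is
a positive multiple of `-e^{-2iθ} / J(1/a)²`, whose argument tends to `π - 2θ`. For `θ = 0` this
limit lies on the branch cut of `arg`, and one uses instead that `a` is real on `Σ_0` for
large `|a|`.
-/

open Bornology
open scoped ComplexConjugate Real

lemma norm_inv_le_of_inv_le_norm {𝕜 : Type*} [NormedDivisionRing 𝕜] {a : 𝕜} {c : ℝ} (hc : 0 < c)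
    (ha : c⁻¹ ≤ ‖a‖) : ‖a⁻¹‖ ≤ c := by
  rw [norm_inv]
  exact inv_le_of_inv_le₀ hc ha

lemma re_cpow_inv_two_nonneg (z : ℂ) : 0 ≤ (z ^ (2⁻¹ : ℂ)).re := by
  rw [cpow_inv_two_re]
  positivity

lemma norm_cpow_inv_two_sub_one_le (z : ℂ) : ‖z ^ (2⁻¹ : ℂ) - 1‖ ≤ ‖z - 1‖ := by
  set s := z ^ (2⁻¹ : ℂ)
  have hs : (s - 1) * (s + 1) = z - 1 := by linear_combination cpow_ofNat_inv_pow z 2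
  have h1 : 1 ≤ ‖s + 1‖ :=
    le_trans (by simp [re_cpow_inv_two_nonneg z, s]) (re_le_norm (s + 1))
  calc ‖s - 1‖ ≤ ‖s - 1‖ * ‖s + 1‖ := le_mul_of_one_le_right (norm_nonneg _) h1
    _ = ‖z - 1‖ := by rw [← norm_mul, hs]

lemma norm_cpow_inv_two_sub_le {u v : ℂ} (hu : ‖u - 1‖ ≤ 1 / 2) (hv : ‖v - 1‖ ≤ 1 / 2) :
    ‖u ^ (2⁻¹ : ℂ) - v ^ (2⁻¹ : ℂ)‖ ≤ ‖u - v‖ := by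
  set s := u ^ (2⁻¹ : ℂ)
  set r := v ^ (2⁻¹ : ℂ)
  have hsr : (s - r) * (s + r) = u - v := by
    linear_combination cpow_ofNat_inv_pow u 2 - cpow_ofNat_inv_pow v 2
  have hs := abs_le.mp ((abs_re_le_norm (s - 1)).trans ((norm_cpow_inv_two_sub_one_le u).trans hu))
  have hr := abs_le.mp ((abs_re_le_norm (r - 1)).trans ((norm_cpow_inv_two_sub_one_le v).trans hv))
  have h1 : 1 ≤ ‖s + r‖ := by
    refine le_trans ?_ (re_le_norm (s + r))
    simp only [sub_re, one_re, add_re] at hs hr ⊢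
    linarith
  calc ‖s - r‖ ≤ ‖s - r‖ * ‖s + r‖ := le_mul_of_one_le_right (norm_nonneg _) h1
    _ = ‖u - v‖ := by rw [← norm_mul, hsr]

lemma norm_one_sub_mul_sub_one_le {t : ℝ} (ht : t ∈ Icc (-1 : ℝ) 1) (u : ℂ) :
    ‖(1 - t * u) - 1‖ ≤ ‖u‖ := by
  rw [sub_sub_cancel_left, norm_neg, norm_mul, norm_real, Real.norm_eq_abs]
  exact mul_le_of_le_one_left (norm_nonneg u) (abs_le.mpr ht)

lemma one_sub_mul_mem_slitPlane {t : ℝ} (ht : t ∈ Icc (-1 : ℝ) 1) {u : ℂ} (hu : ‖u‖ ≤ 1 / 2) :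
    1 - t * u ∈ slitPlane := ball_one_subset_slitPlane <| by
  rw [Metric.mem_ball, dist_eq_norm]
  linarith [norm_one_sub_mul_sub_one_le ht u]

lemma sqrt_one_sub_sq_le_one (t : ℝ) : √(1 - t ^ 2) ≤ 1 :=
  Real.sqrt_le_one.mpr (by nlinarith [sq_nonneg t])

def semicircleIntegral (u : ℂ) : ℂ :=
  ∫ t in (-1 : ℝ)..1, (√(1 - t ^ 2) : ℂ) * (1 - t * u) ^ (2⁻¹ : ℂ)

section semicircleIntegral

variable {u v : ℂ}

lemma continuousOn_semicircleIntegrand (hu : ‖u‖ ≤ 1 / 2) :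
    ContinuousOn (fun t : ℝ => (√(1 - t ^ 2) : ℂ) * (1 - t * u) ^ (2⁻¹ : ℂ)) (Icc (-1) 1) := by
  refine (by fun_prop : Continuous fun t : ℝ => (√(1 - t ^ 2) : ℂ)).continuousOn.mul ?_
  exact ContinuousOn.cpow_const (by fun_prop) fun t ht => one_sub_mul_mem_slitPlane ht hu

lemma intervalIntegrable_semicircleIntegrand (hu : ‖u‖ ≤ 1 / 2) :
    IntervalIntegrable (fun t : ℝ => (√(1 - t ^ 2) : ℂ) * (1 - t * u) ^ (2⁻¹ : ℂ))
      MeasureTheory.volume (-1) 1 :=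
  (continuousOn_semicircleIntegrand hu).intervalIntegrable_of_Icc (by norm_num)

lemma semicircleIntegral_zero : semicircleIntegral 0 = (π / 2 : ℝ) := by
  simp [semicircleIntegral, integral_ofReal, integral_sqrt_one_sub_sq]

lemma norm_semicircleIntegral_sub_le (hu : ‖u‖ ≤ 1 / 2) (hv : ‖v‖ ≤ 1 / 2) :
    ‖semicircleIntegral u - semicircleIntegral v‖ ≤ 2 * ‖u - v‖ := by
  rw [semicircleIntegral, semicircleIntegral, ← integral_sub
    (intervalIntegrable_semicircleIntegrand hu) (intervalIntegrable_semicircleIntegrand hv)]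
  calc _ ≤ ‖u - v‖ * |1 - (-1 : ℝ)| := norm_integral_le_of_norm_le_const fun t ht => ?_
    _ = 2 * ‖u - v‖ := by norm_num [mul_comm]
  have ht : t ∈ Icc (-1 : ℝ) 1 := Ioc_subset_Icc_self (by simpa using ht)
  rw [← mul_sub, norm_mul, norm_real, Real.norm_of_nonneg (Real.sqrt_nonneg _)]
  calc √(1 - t ^ 2) * ‖(1 - t * u) ^ (2⁻¹ : ℂ) - (1 - t * v) ^ (2⁻¹ : ℂ)‖
      ≤ 1 * ‖(1 - t * u) - (1 - t * v)‖ :=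
        mul_le_mul (sqrt_one_sub_sq_le_one t) (norm_cpow_inv_two_sub_le
          ((norm_one_sub_mul_sub_one_le ht u).trans hu)
          ((norm_one_sub_mul_sub_one_le ht v).trans hv)) (norm_nonneg _) zero_le_one
    _ ≤ ‖u - v‖ := by
        rw [one_mul, sub_sub_sub_cancel_left, ← mul_sub, norm_mul, norm_real, Real.norm_eq_abs,
          norm_sub_rev v]
        exact mul_le_of_le_one_left (norm_nonneg _) (abs_le.mpr ht)

lemma norm_semicircleIntegral_sub_pi_div_two_le (hu : ‖u‖ ≤ 1 / 2) :
    ‖semicircleIntegral u - (π / 2 : ℝ)‖ ≤ 2 * ‖u‖ := by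
  simpa [semicircleIntegral_zero] using norm_semicircleIntegral_sub_le hu (v := 0) (by simp)

lemma tendsto_semicircleIntegral :
    Tendsto semicircleIntegral (𝓝 0) (𝓝 (π / 2 : ℝ)) := by
  rw [tendsto_iff_norm_sub_tendsto_zero]
  have h2u : Tendsto (fun u : ℂ => 2 * ‖u‖) (𝓝 0) (𝓝 0) := by
    simpa using ((continuous_norm (E := ℂ)).tendsto 0).const_mul 2
  refine squeeze_zero' (.of_forall fun _ => norm_nonneg _) ?_ h2u
  filter_upwards [Metric.closedBall_mem_nhds (0 : ℂ) (by norm_num : (0 : ℝ) < 1 / 2)] with u hu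
  exact norm_semicircleIntegral_sub_pi_div_two_le (by simpa using hu)

lemma one_le_norm_semicircleIntegral (hu : ‖u‖ ≤ 1 / 8) : 1 ≤ ‖semicircleIntegral u‖ := by
  have h := norm_semicircleIntegral_sub_pi_div_two_le (hu.trans (by norm_num))
  have := norm_sub_norm_le ((π / 2 : ℝ) : ℂ) (semicircleIntegral u)
  rw [norm_sub_rev, norm_real, Real.norm_of_nonneg (by positivity)] at this
  linarith [Real.pi_gt_three]

lemma norm_semicircleIntegral_le_two (hu : ‖u‖ ≤ 1 / 8) : ‖semicircleIntegral u‖ ≤ 2 := by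
  have h := norm_semicircleIntegral_sub_pi_div_two_le (hu.trans (by norm_num))
  have := norm_sub_norm_le (semicircleIntegral u) ((π / 2 : ℝ) : ℂ)
  rw [norm_real, Real.norm_of_nonneg (by positivity)] at this
  linarith [Real.pi_lt_d2]

lemma semicircleIntegral_ne_zero (hu : ‖u‖ ≤ 1 / 8) : semicircleIntegral u ≠ 0 :=
  norm_pos_iff.mp (one_pos.trans_le (one_le_norm_semicircleIntegral hu))

lemma semicircleIntegral_conj (hu : ‖u‖ ≤ 1 / 2) :
    semicircleIntegral (conj u) = conj (semicircleIntegral u) := by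
  rw [semicircleIntegral, semicircleIntegral, ← intervalIntegral_conj]
  refine integral_congr fun t ht => ?_
  rw [uIcc_of_le (by norm_num)] at ht
  have hslit := one_sub_mul_mem_slitPlane ht hu
  have hconj : conj (1 - t * u) = 1 - t * conj u := by simp
  rw [map_mul, conj_ofReal, ← hconj, conj_cpow _ _ (slitPlane_arg_ne_pi hslit), map_inv₀,
    map_ofNat]

end semicircleIntegral

lemma sq_eq_pa {a : ℂ} (ha : a ≠ 0) (t : ℝ) (ht : t ∈ Icc (-1 : ℝ) 1) :
    (a ^ (2⁻¹ : ℂ) * ((√(1 - t ^ 2) : ℂ) * (1 - t * a⁻¹) ^ (2⁻¹ : ℂ))) ^ 2 = pa a t := by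
  have h1 : ((√(1 - t ^ 2) : ℝ) : ℂ) ^ 2 = 1 - (t : ℂ) ^ 2 := by
    rw [← ofReal_pow, Real.sq_sqrt (by nlinarith [ht.1, ht.2])]
    push_cast
    ring
  rw [mul_pow, mul_pow, cpow_ofNat_inv_pow, cpow_ofNat_inv_pow, h1, pa]
  field_simp
  ring

lemma integral_sq_eq_mul_semicircleIntegral_sq {a : ℂ} (ha : 2 ≤ ‖a‖) {f : ℝ → ℂ}
    (hf : ContinuousOn f (Icc (-1) 1)) (hsq : ∀ t ∈ Icc (-1 : ℝ) 1, f t ^ 2 = pa a t) :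
    (∫ t in (-1 : ℝ)..1, f t) ^ 2 = a * semicircleIntegral a⁻¹ ^ 2 := by
  have ha0 : a ≠ 0 := norm_pos_iff.mp (by linarith)
  have hinv : ‖a⁻¹‖ ≤ 1 / 2 := norm_inv_le_of_inv_le_norm (by norm_num) (by norm_num [ha])
  set w : ℝ → ℂ := fun t => a ^ (2⁻¹ : ℂ) * ((√(1 - t ^ 2) : ℂ) * (1 - t * a⁻¹) ^ (2⁻¹ : ℂ))
  have hw : ContinuousOn w (Ioo (-1) 1) :=
    (continuousOn_const.mul (continuousOn_semicircleIntegrand hinv)).mono Ioo_subset_Icc_self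
  have hw0 : ∀ {t : ℝ}, t ∈ Ioo (-1 : ℝ) 1 → w t ≠ 0 := by
    intro t ht
    have hslit := one_sub_mul_mem_slitPlane (Ioo_subset_Icc_self ht) hinv
    refine mul_ne_zero ((cpow_ne_zero_iff_of_exponent_ne_zero (by norm_num)).mpr ha0)
      (mul_ne_zero ?_
        ((cpow_ne_zero_iff_of_exponent_ne_zero (by norm_num)).mpr (slitPlane_ne_zero hslit)))
    exact ofReal_ne_zero.mpr (Real.sqrt_ne_zero'.mpr (by nlinarith [ht.1, ht.2]))
  have hfw : EqOn (f ^ 2) (w ^ 2) (Ioo (-1) 1) := fun t ht => by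
    simp only [Pi.pow_apply, hsq t (Ioo_subset_Icc_self ht), w,
      sq_eq_pa ha0 t (Ioo_subset_Icc_self ht)]
  have hint : ∫ t in (-1 : ℝ)..1, w t = a ^ (2⁻¹ : ℂ) * semicircleIntegral a⁻¹ :=
    integral_const_mul _ _
  rcases isPreconnected_Ioo.eq_or_eq_neg_of_sq_eq (hf.mono Ioo_subset_Icc_self) hw hfw hw0
    with h | h
  · rw [integral_congr_Ioo_of_le (by norm_num) h, hint, mul_pow, cpow_ofNat_inv_pow]
  · rw [integral_congr_Ioo_of_le (by norm_num) h, Pi.neg_def, intervalIntegral.integral_neg,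
      hint, neg_sq, mul_pow, cpow_ofNat_inv_pow]

/-- Comparing `a J(a⁻¹)²` with its conjugate `ā J(ā⁻¹)²` gives `‖a - ā‖ ≤ 8 ‖a - ā‖ / ‖a‖`,
by the Lipschitz bound on `J`. -/
lemma im_eq_zero_of_im_mul_semicircleIntegral_sq_eq_zero {a : ℂ} (ha : 16 ≤ ‖a‖)
    (h : (a * semicircleIntegral a⁻¹ ^ 2).im = 0) : a.im = 0 := by
  set b := conj a
  set X := semicircleIntegral a⁻¹
  set Y := semicircleIntegral b⁻¹
  have hpos : 0 < ‖a‖ := by linarith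
  have hb : ‖b‖ = ‖a‖ := norm_conj a
  have hu : ‖a⁻¹‖ ≤ 1 / 16 := norm_inv_le_of_inv_le_norm (by norm_num) (by norm_num [ha])
  have hv : ‖b⁻¹‖ ≤ 1 / 16 := by rwa [norm_inv, hb, ← norm_inv]
  have hY : Y = conj X := by
    rw [← semicircleIntegral_conj (hu.trans (by norm_num)), map_inv₀]
  have hreal : b * Y ^ 2 = a * X ^ 2 := by
    rw [hY, ← map_pow, ← map_mul, conj_eq_iff_im.mpr h]
  have hdiff : ‖Y - X‖ ≤ 2 * (‖a - b‖ / ‖a‖ ^ 2) := by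
    have hinv : b⁻¹ - a⁻¹ = (a - b) / (a * b) := by
      field_simp [(norm_pos_iff.mp (hb ▸ hpos) : b ≠ 0), (norm_pos_iff.mp hpos : a ≠ 0)]
    have := norm_semicircleIntegral_sub_le (hv.trans (by norm_num)) (hu.trans (by norm_num))
    rwa [hinv, norm_div, norm_mul, hb, ← sq] at this
  have hsum : ‖Y + X‖ ≤ 4 := (norm_add_le _ _).trans <| by
    linarith [norm_semicircleIntegral_le_two (hv.trans (by norm_num)),
      norm_semicircleIntegral_le_two (hu.trans (by norm_num))]
  have hX : 1 ≤ ‖X‖ ^ 2 := one_le_pow₀ (one_le_norm_semicircleIntegral (hu.trans (by norm_num)))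
  have hkey : ‖a - b‖ * ‖X‖ ^ 2 = ‖a‖ * (‖Y - X‖ * ‖Y + X‖) := by
    rw [← hb, ← norm_pow, ← norm_mul, ← norm_mul, ← norm_mul]
    congr 1
    linear_combination -hreal
  have hab : ‖a - b‖ ≤ ‖a - b‖ / 2 := calc
    ‖a - b‖ ≤ ‖a - b‖ * ‖X‖ ^ 2 := le_mul_of_one_le_right (norm_nonneg _) hX
    _ = ‖a‖ * (‖Y - X‖ * ‖Y + X‖) := hkey
    _ ≤ ‖a‖ * (2 * (‖a - b‖ / ‖a‖ ^ 2) * 4) := by gcongr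
    _ = 8 * ‖a - b‖ / ‖a‖ := by field_simp; ring
    _ ≤ ‖a - b‖ / 2 := by
        rw [div_le_div_iff₀ hpos (by norm_num)]
        nlinarith [norm_nonneg (a - b)]
  have hab0 : a - b = 0 := norm_eq_zero.mp (by linarith [norm_nonneg (a - b)])
  exact conj_eq_iff_im.mp (sub_eq_zero.mp hab0).symm

lemma exp_I_mul_sq (θ : ℝ) : exp (I * θ) ^ 2 = exp (2 * I * θ) := by
  rw [← exp_nat_mul]
  push_cast
  ring_nf

lemma tendsto_sq_div_of_sq_eq (θ : ℝ) {f : ℂ → ℂ}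
    (hf : ∀ a : ℂ, 2 ≤ ‖a‖ → f a ^ 2 = a * semicircleIntegral a⁻¹ ^ 2) :
    Tendsto (fun a : ℂ => (exp (I * θ) * f a) ^ 2 / (((π ^ 2 / 4 : ℝ) : ℂ) * a * exp (2 * I * θ)))
      (cobounded ℂ) (𝓝 1) := by
  have hJ : Tendsto (fun a : ℂ => semicircleIntegral a⁻¹) (cobounded ℂ) (𝓝 (π / 2 : ℝ)) :=
    tendsto_semicircleIntegral.comp tendsto_inv₀_cobounded
  have hπ : ((π ^ 2 / 4 : ℝ) : ℂ) ≠ 0 := ofReal_ne_zero.mpr (by positivity)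
  have hlim : ((π / 2 : ℝ) : ℂ) ^ 2 / ((π ^ 2 / 4 : ℝ) : ℂ) = 1 := by
    rw [div_eq_one_iff_eq hπ]
    push_cast
    ring
  refine (hlim ▸ (hJ.pow 2).div_const _).congr' ?_
  filter_upwards [tendsto_norm_cobounded_atTop.eventually_ge_atTop 2] with a ha
  have ha0 : a ≠ 0 := norm_pos_iff.mp (by linarith)
  rw [mul_pow, hf a ha, exp_I_mul_sq]
  field_simp [exp_ne_zero]

lemma exists_pos_mul_semicircleIntegral_sq_eq {θ : ℝ} {a z : ℂ} (ha : 8 ≤ ‖a‖)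
    (hz : z ^ 2 = a * semicircleIntegral a⁻¹ ^ 2) (hre : (exp (I * θ) * z).re = 0) :
    ∃ r : ℝ, 0 < r ∧ a * semicircleIntegral a⁻¹ ^ 2 = -r * exp (-(2 * I * θ)) := by
  set w := exp (I * θ) * z
  have ha0 : a ≠ 0 := norm_pos_iff.mp (by linarith)
  have hJ : semicircleIntegral a⁻¹ ≠ 0 :=
    semicircleIntegral_ne_zero (norm_inv_le_of_inv_le_norm (by norm_num) (by norm_num [ha]))
  have hw2 : w ^ 2 = exp (2 * I * θ) * (a * semicircleIntegral a⁻¹ ^ 2) := by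
    rw [mul_pow, hz, exp_I_mul_sq]
  have hw0 : w ≠ 0 := fun h => by
    rw [h, zero_pow two_ne_zero] at hw2
    exact mul_ne_zero (exp_ne_zero _) (mul_ne_zero ha0 (pow_ne_zero 2 hJ)) hw2.symm
  have hconj : conj w = -w := Complex.ext (by simp [hre]) (by simp)
  refine ⟨normSq w, normSq_pos.mpr hw0, ?_⟩
  rw [← mul_conj, hconj, mul_neg, neg_neg, ← sq, hw2, mul_right_comm, ← exp_add]
  simp

lemma eventually_exists_pos_mul_semicircleIntegral_sq_eq (θ : ℝ) {f : ℂ → ℂ}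
    (hf : ∀ a : ℂ, 2 ≤ ‖a‖ → f a ^ 2 = a * semicircleIntegral a⁻¹ ^ 2) :
    ∀ᶠ a in cobounded ℂ ⊓ 𝓟 {a | (exp (I * θ) * f a).re = 0}, 16 ≤ ‖a‖ ∧
      ∃ r : ℝ, 0 < r ∧ a * semicircleIntegral a⁻¹ ^ 2 = -r * exp (-(2 * I * θ)) := by
  rw [eventually_inf_principal]
  filter_upwards [tendsto_norm_cobounded_atTop.eventually_ge_atTop 16] with a ha hre
  exact ⟨ha, exists_pos_mul_semicircleIntegral_sq_eq (by linarith) (hf a (by linarith)) hre⟩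

lemma arg_eq_pi_of_mul_semicircleIntegral_sq_eq_neg {a : ℂ} {r : ℝ} (ha : 16 ≤ ‖a‖) (hr : 0 < r)
    (h : a * semicircleIntegral a⁻¹ ^ 2 = -r) : arg a = π := by
  have ha0 : a.im = 0 :=
    im_eq_zero_of_im_mul_semicircleIntegral_sq_eq_zero ha (by rw [h]; simp)
  have hJ : (semicircleIntegral a⁻¹).im = 0 := by
    rw [← conj_eq_iff_im, ← semicircleIntegral_conj
      (norm_inv_le_of_inv_le_norm (by norm_num) (by norm_num; linarith)), map_inv₀,
      conj_eq_iff_im.mpr ha0]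
  have hre : a.re * (semicircleIntegral a⁻¹).re ^ 2 = -r := by
    simpa [sq, mul_re, ha0, hJ] using congrArg re h
  rw [← re_add_im a, ha0, ofReal_zero, zero_mul, add_zero]
  exact arg_ofReal_of_neg (by nlinarith [sq_nonneg (semicircleIntegral a⁻¹).re])

lemma tendsto_arg_of_re_eq_zero {f : ℂ → ℂ}
    (hf : ∀ a : ℂ, 2 ≤ ‖a‖ → f a ^ 2 = a * semicircleIntegral a⁻¹ ^ 2) :
    Tendsto arg (cobounded ℂ ⊓ 𝓟 {a | (f a).re = 0}) (𝓝 π) := by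
  have hlevel := eventually_exists_pos_mul_semicircleIntegral_sq_eq 0 hf
  simp only [ofReal_zero, mul_zero, neg_zero, exp_zero, one_mul, mul_one] at hlevel
  refine tendsto_const_nhds.congr' ?_
  filter_upwards [hlevel] with a ⟨ha, r, hr, h⟩
  exact (arg_eq_pi_of_mul_semicircleIntegral_sq_eq_neg ha hr h).symm

lemma tendsto_arg_of_re_exp_mul_eq_zero {θ : ℝ} (hθ₀ : 0 < θ) (hθπ : θ < π) {f : ℂ → ℂ}
    (hf : ∀ a : ℂ, 2 ≤ ‖a‖ → f a ^ 2 = a * semicircleIntegral a⁻¹ ^ 2) :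
    Tendsto arg (cobounded ℂ ⊓ 𝓟 {a | (exp (I * θ) * f a).re = 0}) (𝓝 (π - 2 * θ)) := by
  set ζ := -exp (-(2 * I * θ))
  have hζ : ζ = exp ((π - 2 * θ : ℝ) * I) := by
    rw [show ((π - 2 * θ : ℝ) : ℂ) * I = π * I + -(2 * I * θ) by push_cast; ring, exp_add,
      exp_pi_mul_I]
    ring
  have hargζ : arg ζ = π - 2 * θ := by
    rw [hζ, exp_mul_I]
    exact arg_cos_add_sin_mul_I ⟨by linarith, by linarith⟩
  set L := ((4 / π ^ 2 : ℝ) : ℂ) * ζ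
  have hargL : arg L = π - 2 * θ := by rw [arg_real_mul _ (by positivity), hargζ]
  have hL : L ∈ slitPlane := mem_slitPlane_iff_arg.mpr
    ⟨by rw [hargL]; linarith, mul_ne_zero (ofReal_ne_zero.mpr (by positivity)) (by simp [ζ])⟩
  have hJ : Tendsto (fun a : ℂ => ζ / semicircleIntegral a⁻¹ ^ 2) (cobounded ℂ) (𝓝 L) := by
    have hπ : ((π / 2 : ℝ) : ℂ) ^ 2 ≠ 0 := pow_ne_zero 2 (ofReal_ne_zero.mpr (by positivity))
    have hval : ζ / ((π / 2 : ℝ) : ℂ) ^ 2 = ((4 / π ^ 2 : ℝ) : ℂ) * ζ := by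
      push_cast
      field_simp
      ring
    have h := (tendsto_const_nhds (x := ζ)).div
      ((tendsto_semicircleIntegral.comp tendsto_inv₀_cobounded).pow 2) hπ
    rwa [hval] at h
  rw [← hargL]
  refine ((continuousAt_arg hL).tendsto.comp (hJ.mono_left inf_le_left)).congr' ?_
  filter_upwards [eventually_exists_pos_mul_semicircleIntegral_sq_eq θ hf] with a ⟨ha, r, hr, h⟩
  have hJ0 : semicircleIntegral a⁻¹ ≠ 0 :=
    semicircleIntegral_ne_zero (norm_inv_le_of_inv_le_norm (by norm_num) (by norm_num; linarith))
  have ha : a = r * (ζ / semicircleIntegral a⁻¹ ^ 2) := by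
    rw [mul_div_assoc', eq_div_iff (pow_ne_zero 2 hJ0), h]
    simp only [ζ]
    ring
  have := arg_real_mul (ζ / semicircleIntegral a⁻¹ ^ 2) hr
  rw [← ha] at this
  exact this.symm

theorem stmt9 (θ : ℝ) (hθ : θ ∈ Icc (0:ℝ) (Real.pi / 4))
    (q : ℂ → ℝ → ℂ)
    -- `q a` is a continuous branch of `√(p_a)` along `[-1,1]`
    (hqc : ∀ a : ℂ, ContinuousOn (q a) (Icc (-1:ℝ) 1))
    (hqsq : ∀ a : ℂ, ∀ t ∈ Icc (-1:ℝ) 1, (q a t) ^ 2 = pa a (t : ℂ)) :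
    -- `(∫_{-1}^1 e^{iθ}√(p_a))² ~ (π²/4) a e^{2iθ}` as `a → ∞`
    Tendsto
      (fun a : ℂ =>
        (Complex.exp (Complex.I * θ) * ∫ t in (-1:ℝ)..1, q a t) ^ 2 /
          (((Real.pi ^ 2 / 4 : ℝ) : ℂ) * a * Complex.exp (2 * Complex.I * θ)))
      (Bornology.cobounded ℂ) (𝓝 1) ∧
    -- any unbounded arc of `Σ_θ` escapes to `∞` in the direction `arg a → π - 2θ`
    Tendsto Complex.arg
      (Bornology.cobounded ℂ ⊓
        𝓟 {a : ℂ | (Complex.exp (Complex.I * θ) * ∫ t in (-1:ℝ)..1, q a t).re = 0})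
      (𝓝 (Real.pi - 2 * θ)) := by
  have hsq : ∀ a : ℂ, 2 ≤ ‖a‖ →
      (∫ t in (-1:ℝ)..1, q a t) ^ 2 = a * semicircleIntegral a⁻¹ ^ 2 :=
    fun a ha => integral_sq_eq_mul_semicircleIntegral_sq ha (hqc a) (hqsq a)
  refine ⟨tendsto_sq_div_of_sq_eq θ hsq, ?_⟩
  rcases hθ.1.eq_or_lt with rfl | hθ₀
  · simpa using tendsto_arg_of_re_eq_zero hsq
  · exact tendsto_arg_of_re_exp_mul_eq_zero hθ₀ (by linarith [hθ.2, Real.pi_pos]) hsq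
end
end

section
/- For θ ∈ [π/4, π/2) and a ∈ ℂ, one has Re(e^{iθ} ∫_{[±1, a]} √(p_a(t)) dt) = 0 if and only if Re(e^{i(π/2-θ)} ∫_{[∓1, -ā]} √(p_{-ā}(t)) dt) = 0. In particular the level sets Σ_{-1, π/2 - θ} and Σ_{1, θ} are mirror images of each other under reflection in the imaginary axis a ↦ -ā. -/
open Complex Set intervalIntegral

noncomputable section

/-- `q` is a continuous branch of `√(p_a)` along the straight segment `[e, a]`,
parametrized by `t ↦ e + t(a - e)`, `t ∈ [0,1]`. -/
def SegBranch (a e : ℂ) (q : ℝ → ℂ) : Prop :=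
  ContinuousOn q (Icc (0:ℝ) 1) ∧
    ∀ t ∈ Icc (0:ℝ) 1, (q t) ^ 2 = pa a (e + (t : ℂ) * (a - e))

/-- `a` satisfies `Re (e^{iθ} ∫_{[e,a]} √(p_a(t)) dt) = 0` for (some, equivalently any)
continuous branch of the square root along the segment. -/
def OnLevel (θ : ℝ) (a e : ℂ) : Prop :=
  ∃ q : ℝ → ℂ, SegBranch a e q ∧
    (Complex.exp (Complex.I * θ) * ((a - e) * ∫ t in (0:ℝ)..1, q t)).re = 0

lemma intervalIntegral_conj {f : ℝ → ℂ} {a b : ℝ} :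
    ∫ t in a..b, (starRingEnd ℂ) (f t) = (starRingEnd ℂ) (∫ t in a..b, f t) := by
  simp only [intervalIntegral, integral_conj, map_sub]

lemma exp_mirror (θ : ℝ) :
    Complex.exp (Complex.I * ((Real.pi / 2 - θ : ℝ) : ℂ)) =
      Complex.I * (starRingEnd ℂ) (Complex.exp (Complex.I * θ)) := by
  have h1 : (starRingEnd ℂ) (Complex.exp (Complex.I * θ)) =
      Complex.exp (-(Complex.I * θ)) := by
    rw [← Complex.exp_conj]
    congr 1
    simp [Complex.conj_I]
  have hpi : Complex.exp (Complex.I * ((Real.pi / 2 : ℝ) : ℂ)) = Complex.I := by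
    rw [mul_comm, Complex.exp_mul_I, ← Complex.ofReal_cos, ← Complex.ofReal_sin,
      Real.cos_pi_div_two, Real.sin_pi_div_two]
    simp
  have harg : Complex.I * ((Real.pi / 2 - θ : ℝ) : ℂ) =
      Complex.I * ((Real.pi / 2 : ℝ) : ℂ) + -(Complex.I * θ) := by
    push_cast; ring
  rw [h1, harg, Complex.exp_add, hpi]

lemma key (θ : ℝ) (a e : ℂ) (he : (starRingEnd ℂ) e = e) :
    OnLevel θ a e → OnLevel (Real.pi / 2 - θ) (-(starRingEnd ℂ) a) (-e) := by
  rintro ⟨q, ⟨hc, hq⟩, hre⟩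
  set C := starRingEnd ℂ
  refine ⟨fun t => Complex.I * C (q t), ⟨?_, ?_⟩, ?_⟩
  · exact continuous_const.continuousOn.mul (Complex.continuous_conj.comp_continuousOn hc)
  · intro t ht
    have h1 := hq t ht
    have h2 : (Complex.I * C (q t)) ^ 2 = -C ((q t) ^ 2) := by
      rw [map_pow]
      have hI : (Complex.I) * Complex.I = -1 := Complex.I_mul_I
      ring_nf
      rw [Complex.I_sq]
      ring
    rw [h2, h1]
    simp only [pa, C, map_mul, map_sub, map_add, map_pow, map_one, Complex.conj_ofReal, he]
    ring
  · have hint : (∫ t in (0:ℝ)..1, Complex.I * C (q t)) =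
        Complex.I * C (∫ t in (0:ℝ)..1, q t) := by
      rw [intervalIntegral.integral_const_mul, intervalIntegral_conj]
    rw [hint]
    have hkey : Complex.exp (Complex.I * ((Real.pi / 2 - θ : ℝ) : ℂ)) *
        ((-C a - -e) * (Complex.I * C (∫ t in (0:ℝ)..1, q t))) =
        C (Complex.exp (Complex.I * θ) * ((a - e) * ∫ t in (0:ℝ)..1, q t)) := by
      rw [exp_mirror, map_mul, map_mul, map_sub, he]
      have hI : (Complex.I) * Complex.I = -1 := Complex.I_mul_I
      linear_combination (C (Complex.exp (Complex.I * θ)) * C (∫ t in (0:ℝ)..1, q t) *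
        (e - C a)) * hI
    rw [hkey, Complex.conj_re, hre]

lemma key_iff (θ : ℝ) (a e : ℂ) (he : (starRingEnd ℂ) e = e) :
    OnLevel θ a e ↔ OnLevel (Real.pi / 2 - θ) (-(starRingEnd ℂ) a) (-e) := by
  constructor
  · exact key θ a e he
  · intro h
    have he' : (starRingEnd ℂ) (-e) = -e := by rw [map_neg, he]
    have := key (Real.pi / 2 - θ) (-(starRingEnd ℂ) a) (-e) he' h
    simpa using this

theorem stmt10 (θ : ℝ) (hθ : θ ∈ Ico (Real.pi / 4) (Real.pi / 2)) :
    (∀ a : ℂ,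
      (OnLevel θ a 1 ↔ OnLevel (Real.pi / 2 - θ) (-(starRingEnd ℂ) a) (-1)) ∧
      (OnLevel θ a (-1) ↔ OnLevel (Real.pi / 2 - θ) (-(starRingEnd ℂ) a) 1)) ∧
    -- the level sets `Σ_{-1, π/2-θ}` and `Σ_{1, θ}` are mirror images under `a ↦ -ā`
    {a : ℂ | OnLevel (Real.pi / 2 - θ) a (-1)} =
      (fun a : ℂ => -(starRingEnd ℂ) a) '' {a : ℂ | OnLevel θ a 1} := by
  have h1 : ∀ a : ℂ, OnLevel θ a 1 ↔ OnLevel (Real.pi / 2 - θ) (-(starRingEnd ℂ) a) (-1) := by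
    intro a; exact key_iff θ a 1 (by simp)
  have h2 : ∀ a : ℂ, OnLevel θ a (-1) ↔ OnLevel (Real.pi / 2 - θ) (-(starRingEnd ℂ) a) 1 := by
    intro a
    have := key_iff θ a (-1) (by simp)
    simpa using this
  refine ⟨fun a => ⟨h1 a, h2 a⟩, ?_⟩
  ext a
  simp only [mem_setOf_eq, mem_image]
  constructor
  · intro h
    refine ⟨-(starRingEnd ℂ) a, ?_, by simp⟩
    rw [h1 (-(starRingEnd ℂ) a)]
    simpa using h
  · rintro ⟨b, hb, rfl⟩
    exact (h1 b).mp hb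
end
end

section
/- For a ∈ ℂ \ [-1,1], the elliptic-type period ∫_{-1}^{1} √((1-t²)/(a-t)) dt is nonzero. Consequently, the holomorphic function a ↦ ∫_{-1}^{1} √(p_a(t)) dt has nonvanishing derivative on ℂ \ [-1,1], so the harmonic function a ↦ Re(e^{iθ} ∫_{-1}^{1} √(p_a(t)) dt) has no critical points in ℂ \ [-1,1], and every component of its zero level set is a smooth curve. -/
open Complex Set intervalIntegral

noncomputable section

/-- The segment `[-1,1]` viewed as a subset of `ℂ`. -/
def cut : Set ℂ := {z : ℂ | z.im = 0 ∧ z.re ∈ Icc (-1:ℝ) 1}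

theorem stmt12 (θ : ℝ) (a : ℂ) (ha : a ∈ cutᶜ)
    (q : ℂ → ℝ → ℂ) (r : ℝ → ℂ)
    -- `q b` is a continuous branch of `√(p_b)` along `[-1,1]`, for `b ∉ [-1,1]`
    (hqc : ∀ b ∈ cutᶜ, ContinuousOn (q b) (Icc (-1:ℝ) 1))
    (hqsq : ∀ b ∈ cutᶜ, ∀ t ∈ Icc (-1:ℝ) 1, (q b t) ^ 2 = pa b (t : ℂ))
    -- `r` is a continuous branch of `√((1-t²)/(a-t))` along `[-1,1]`
    (hrc : ContinuousOn r (Icc (-1:ℝ) 1))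
    (hrsq : ∀ t ∈ Icc (-1:ℝ) 1, (r t) ^ 2 = (1 - (t:ℂ) ^ 2) / (a - (t:ℂ)))
    -- differentiation under the integral sign
    (hderiv : deriv (fun b : ℂ => ∫ t in (-1:ℝ)..1, q b t) a =
      -(1/2 : ℂ) * ∫ t in (-1:ℝ)..1, r t) :
    -- the elliptic-type period is nonzero ...
    (∫ t in (-1:ℝ)..1, r t) ≠ 0 ∧
    -- ... hence `a ↦ ∫_{-1}^1 √(p_a)` has nonvanishing derivative at `a`,
    -- so `Re (e^{iθ} ∫_{-1}^1 √(p_a))` has no critical point at `a`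
    deriv (fun b : ℂ => Complex.exp (Complex.I * θ) * ∫ t in (-1:ℝ)..1, q b t) a ≠ 0 := by
  have ha' : ¬ (a.im = 0 ∧ a.re ∈ Icc (-1:ℝ) 1) := ha
  -- a avoids the segment
  have hat : ∀ t : ℝ, t ∈ Icc (-1:ℝ) 1 → a - (t:ℂ) ≠ 0 := by
    intro t ht h
    have : a = (t:ℂ) := sub_eq_zero.mp h
    exact ha' ⟨by rw [this]; simp, by rw [this]; simpa using ht⟩
  have ha0 : a ≠ 0 := by
    intro h
    exact ha' ⟨by rw [h]; simp, by rw [h]; norm_num⟩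
  have h0mem : (0:ℝ) ∈ Icc (-1:ℝ) 1 := by norm_num
  -- r 0 ≠ 0
  have hr0sq : (r 0) ^ 2 = 1 / a := by
    have := hrsq 0 h0mem; simpa using this
  have hr0 : r 0 ≠ 0 := by
    intro h
    rw [h] at hr0sq
    simp at hr0sq
    exact ha0 hr0sq.symm
  -- the auxiliary function g
  set g : ℝ → ℂ := fun t => (starRingEnd ℂ) (r 0) * r t with hgdef
  have hgsq : ∀ t ∈ Icc (-1:ℝ) 1,
      (g t) ^ 2 = (1 - (t:ℂ)^2) / ((a - (t:ℂ)) * (starRingEnd ℂ) a) := by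
    intro t ht
    have hca : (starRingEnd ℂ) a ≠ 0 := by simpa using ha0
    have hz := hat t ht
    have : (g t) ^ 2 = (starRingEnd ℂ) ((r 0)^2) * (r t)^2 := by
      simp [hgdef, mul_pow, map_pow]
    rw [this, hr0sq, hrsq t ht]
    rw [map_div₀]
    simp only [map_one]
    rw [div_mul_div_comm, one_mul, mul_comm ((starRingEnd ℂ) a) (a - (t:ℂ))]
  -- key positivity: the squared denominator avoids the slit
  have keyz : ∀ t : ℝ, t ∈ Ioo (-1:ℝ) 1 →
      ¬ (((a - (t:ℂ)) * (starRingEnd ℂ) a).im = 0 ∧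
         ((a - (t:ℂ)) * (starRingEnd ℂ) a).re ≤ 0) := by
    intro t ht ⟨him, hre⟩
    have hzim : ((a - (t:ℂ)) * (starRingEnd ℂ) a).im = t * a.im := by
      simp [Complex.mul_im, Complex.sub_re, Complex.sub_im]; ring
    have hzre : ((a - (t:ℂ)) * (starRingEnd ℂ) a).re
        = a.re^2 + a.im^2 - t * a.re := by
      simp [Complex.mul_re, Complex.sub_re, Complex.sub_im]; ring
    rw [hzim] at him
    rw [hzre] at hre
    by_cases haim : a.im = 0
    · have hre' : ¬ (-1 ≤ a.re ∧ a.re ≤ 1) := by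
        intro h; exact ha' ⟨haim, h⟩
      push_neg at hre'
      rcases lt_or_ge a.re (-1) with h1 | h1
      · nlinarith [ht.1, ht.2]
      · have h2 : 1 < a.re := hre' h1
        nlinarith [ht.1, ht.2]
    · have : t = 0 := by
        rcases mul_eq_zero.mp him with h | h
        · exact h
        · exact absurd h haim
      rw [this] at hre
      nlinarith [sq_nonneg a.re, sq_nonneg a.im, Complex.normSq_pos.mpr ha0,
        Complex.normSq_apply a]
  -- g has nonvanishing real part on the open interval
  have hgr_ne : ∀ t : ℝ, t ∈ Ioo (-1:ℝ) 1 → (g t).re ≠ 0 := by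
    intro t ht h0
    have htmem : t ∈ Icc (-1:ℝ) 1 := Ioo_subset_Icc_self ht
    have hsq := hgsq t htmem
    -- with Re (g t) = 0, (g t)^2 is real nonpositive
    have h1 : ((g t)^2).im = 0 := by
      have : ((g t)^2).im = (g t).re * (g t).im + (g t).im * (g t).re := by
        simp [sq, Complex.mul_im]
      rw [this, h0]; ring
    have h2 : ((g t)^2).re ≤ 0 := by
      have : ((g t)^2).re = (g t).re * (g t).re - (g t).im * (g t).im := by
        simp [sq, Complex.mul_re]
      rw [this, h0]; nlinarith [sq_nonneg ((g t).im)]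
    set z : ℂ := (a - (t:ℂ)) * (starRingEnd ℂ) a with hz
    have hzne : z ≠ 0 := by
      apply mul_ne_zero (hat t htmem)
      simpa using ha0
    have hc : (0:ℝ) < 1 - t^2 := by nlinarith [ht.1, ht.2]
    have hnsq : 0 < Complex.normSq z := Complex.normSq_pos.mpr hzne
    have hcast : (1 - (t:ℂ)^2) = ((1 - t^2 : ℝ) : ℂ) := by push_cast; ring
    rw [hcast] at hsq
    have hqim : (((1 - t^2 : ℝ) : ℂ) / z).im = (1 - t^2) * (-z.im) / Complex.normSq z := by
      rw [Complex.div_im, Complex.ofReal_re, Complex.ofReal_im]; ring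
    have hqre : (((1 - t^2 : ℝ) : ℂ) / z).re = (1 - t^2) * z.re / Complex.normSq z := by
      rw [Complex.div_re, Complex.ofReal_re, Complex.ofReal_im]; ring
    rw [hsq] at h1 h2
    rw [hqim] at h1
    rw [hqre] at h2
    apply keyz t ht
    constructor
    · have hmul : (1 - t^2) * (-z.im) = 0 := by
        rcases div_eq_zero_iff.mp h1 with h | h
        · exact h
        · exact absurd h (ne_of_gt hnsq)
      have := mul_eq_zero.mp hmul
      rcases this with h | h
      · exact absurd h (ne_of_gt hc)
      · linarith [neg_eq_zero.mp h]
    · by_contra hpos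
      push_neg at hpos
      have : 0 < (1 - t^2) * z.re / Complex.normSq z :=
        div_pos (mul_pos hc hpos) hnsq
      linarith
  -- Re (g 0) > 0
  have hg0 : 0 < (g 0).re := by
    have : g 0 = (Complex.normSq (r 0) : ℂ) := by
      simp [hgdef, Complex.normSq_eq_conj_mul_self]
    rw [this]
    simpa using Complex.normSq_pos.mpr hr0
  -- g has continuous real part
  have hgc : ContinuousOn (fun t => (g t).re) (Icc (-1:ℝ) 1) := by
    apply Complex.continuous_re.comp_continuousOn
    exact (continuousOn_const.mul hrc)
  -- Re g > 0 on the open interval by the IVT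
  have hgpos : ∀ t : ℝ, t ∈ Ioo (-1:ℝ) 1 → 0 < (g t).re := by
    intro t ht
    rcases lt_trichotomy 0 ((g t).re) with h | h | h
    · exact h
    · exact absurd h.symm (hgr_ne t ht)
    · exfalso
      have hsub : uIcc (0:ℝ) t ⊆ Ioo (-1:ℝ) 1 := by
        have : OrdConnected (Ioo (-1:ℝ) 1) := ordConnected_Ioo
        exact this.uIcc_subset ⟨by norm_num, by norm_num⟩ ht
      have hc2 : ContinuousOn (fun t => (g t).re) (uIcc (0:ℝ) t) :=
        hgc.mono (hsub.trans Ioo_subset_Icc_self)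
      have := intermediate_value_uIcc hc2
      have h0m : (0:ℝ) ∈ uIcc ((g 0).re) ((g t).re) := by
        rw [Set.mem_uIcc]
        right; exact ⟨le_of_lt h, le_of_lt hg0⟩
      obtain ⟨s, hs, hs0⟩ := this h0m
      exact hgr_ne s (hsub hs) hs0
  -- the integral of Re g is positive
  have hint : IntervalIntegrable g MeasureTheory.volume (-1:ℝ) 1 := by
    apply ContinuousOn.intervalIntegrable
    have : uIcc (-1:ℝ) 1 = Icc (-1:ℝ) 1 := uIcc_of_le (by norm_num)
    rw [this]
    exact continuousOn_const.mul hrc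
  have hintre : 0 < ∫ t in (-1:ℝ)..1, (g t).re := by
    apply intervalIntegral_pos_of_pos_on
    · apply ContinuousOn.intervalIntegrable
      have : uIcc (-1:ℝ) 1 = Icc (-1:ℝ) 1 := uIcc_of_le (by norm_num)
      rw [this]; exact hgc
    · exact fun x hx => hgpos x hx
    · norm_num
  have hcomm : (∫ t in (-1:ℝ)..1, (g t).re) = (∫ t in (-1:ℝ)..1, g t).re := by
    have := Complex.reCLM.intervalIntegral_comp_comm hint
    simpa using this
  have hIg : (∫ t in (-1:ℝ)..1, g t) ≠ 0 := by
    intro h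
    rw [hcomm, h] at hintre
    simp at hintre
  have hIgeq : (∫ t in (-1:ℝ)..1, g t) = (starRingEnd ℂ) (r 0) * ∫ t in (-1:ℝ)..1, r t := by
    simp only [hgdef]
    exact intervalIntegral.integral_const_mul _ _
  have hIr : (∫ t in (-1:ℝ)..1, r t) ≠ 0 := by
    intro h
    rw [hIgeq, h, mul_zero] at hIg
    exact hIg rfl
  refine ⟨hIr, ?_⟩
  -- second part
  have hdne : deriv (fun b : ℂ => ∫ t in (-1:ℝ)..1, q b t) a ≠ 0 := by
    rw [hderiv]
    exact mul_ne_zero (by norm_num) hIr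
  have hdiff : DifferentiableAt ℂ (fun b : ℂ => ∫ t in (-1:ℝ)..1, q b t) a := by
    by_contra h
    exact hdne (deriv_zero_of_not_differentiableAt h)
  rw [deriv_const_mul _ hdiff]
  exact mul_ne_zero (Complex.exp_ne_zero _) hdne
end
end

section
/- Let a ∈ ℂ with Im a > 0 and x > 1 a real number. Then ∫₁ˣ Re(√(t-a)) √(t²-1) dt ≠ 0, where √(t-a) is a continuous branch on [1,x]. In particular Re ∫₁ˣ √(p_a(t)) dt ≠ 0 with the branch √(p_a(t)) = √(t-a)·√(t²-1), so no horizontal trajectory of ϖ_{a,0} = -(z-a)(z²-1)dz² emanating from z = 1 passes through a point of (1, ∞). -/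
open Complex Set intervalIntegral

noncomputable section

theorem stmt15 (a : ℂ) (ha : 0 < a.im) (x : ℝ) (hx : 1 < x)
    (s : ℝ → ℂ)
    -- `s` is a continuous branch of `√(t - a)` on `[1, x]`
    (hsc : ContinuousOn s (Icc (1:ℝ) x))
    (hsq : ∀ t ∈ Icc (1:ℝ) x, (s t) ^ 2 = (t : ℂ) - a) :
    (∫ t in (1:ℝ)..x, (s t).re * Real.sqrt (t ^ 2 - 1)) ≠ 0 ∧
    (∫ t in (1:ℝ)..x, s t * (Real.sqrt (t ^ 2 - 1) : ℂ)).re ≠ 0 := by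
  -- Re (s t) never vanishes
  have hre : ∀ t ∈ Icc (1:ℝ) x, (s t).re ≠ 0 := by
    intro t ht h0
    have him := congrArg Complex.im (hsq t ht)
    simp [pow_two, Complex.mul_im, Complex.sub_im, h0] at him
    linarith
  -- continuity of Re ∘ s
  have hgc : ContinuousOn (fun t => (s t).re) (Icc (1:ℝ) x) :=
    Complex.continuous_re.comp_continuousOn hsc
  -- constant sign
  have key : (∀ t ∈ Icc (1:ℝ) x, 0 < (s t).re) ∨ (∀ t ∈ Icc (1:ℝ) x, (s t).re < 0) := by
    by_contra h
    push_neg at h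
    obtain ⟨⟨t₁, ht₁, ht₁'⟩, t₂, ht₂, ht₂'⟩ := h
    have h₁ : (s t₁).re < 0 := lt_of_le_of_ne ht₁' (hre t₁ ht₁)
    have h₂ : 0 < (s t₂).re := lt_of_le_of_ne ht₂' (Ne.symm (hre t₂ ht₂))
    have hsub : uIcc t₁ t₂ ⊆ Icc (1:ℝ) x := Set.uIcc_subset_Icc ht₁ ht₂
    have hmem : (0:ℝ) ∈ uIcc ((s t₁).re) ((s t₂).re) := by
      rw [Set.mem_uIcc]; left; exact ⟨h₁.le, h₂.le⟩
    obtain ⟨c, hc, hc0⟩ := intermediate_value_uIcc (hgc.mono hsub) hmem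
    exact hre c (hsub hc) hc0
  -- square root factor
  have hsqrtc : Continuous (fun t : ℝ => Real.sqrt (t ^ 2 - 1)) :=
    Real.continuous_sqrt.comp (by continuity)
  have hsqrtpos : ∀ t ∈ Ioo (1:ℝ) x, 0 < Real.sqrt (t ^ 2 - 1) := by
    intro t ht
    have : 1 < t ^ 2 := by nlinarith [ht.1]
    exact Real.sqrt_pos.mpr (by linarith)
  -- integrability of the real integrand
  have hfi : IntervalIntegrable (fun t => (s t).re * Real.sqrt (t ^ 2 - 1)) MeasureTheory.volume 1 x := by
    apply ContinuousOn.intervalIntegrable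
    rw [Set.uIcc_of_le hx.le]
    exact hgc.mul hsqrtc.continuousOn
  -- the first integral is nonzero
  have h1 : (∫ t in (1:ℝ)..x, (s t).re * Real.sqrt (t ^ 2 - 1)) ≠ 0 := by
    rcases key with hpos | hneg
    · have : 0 < ∫ t in (1:ℝ)..x, (s t).re * Real.sqrt (t ^ 2 - 1) := by
        apply intervalIntegral.intervalIntegral_pos_of_pos_on hfi _ hx
        intro t ht
        exact mul_pos (hpos t ⟨ht.1.le, ht.2.le⟩) (hsqrtpos t ht)
      exact this.ne'
    · have : 0 < ∫ t in (1:ℝ)..x, -((s t).re * Real.sqrt (t ^ 2 - 1)) := by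
        apply intervalIntegral.intervalIntegral_pos_of_pos_on hfi.neg _ hx
        intro t ht
        have := mul_pos (neg_pos.mpr (hneg t ⟨ht.1.le, ht.2.le⟩)) (hsqrtpos t ht)
        simpa [neg_mul] using this
      rw [intervalIntegral.integral_neg] at this
      linarith
  refine ⟨h1, ?_⟩
  -- relate the real part of the complex integral to the real integral
  have hFi : IntervalIntegrable (fun t => s t * (Real.sqrt (t ^ 2 - 1) : ℂ)) MeasureTheory.volume 1 x := by
    apply ContinuousOn.intervalIntegrable
    rw [Set.uIcc_of_le hx.le]
    exact hsc.mul (Complex.continuous_ofReal.comp hsqrtc).continuousOn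
  have hInt : MeasureTheory.IntegrableOn (fun t => s t * (Real.sqrt (t ^ 2 - 1) : ℂ))
      (Ioc (1:ℝ) x) MeasureTheory.volume :=
    (intervalIntegrable_iff_integrableOn_Ioc_of_le hx.le).mp hFi
  have heq : (∫ t in (1:ℝ)..x, s t * (Real.sqrt (t ^ 2 - 1) : ℂ)).re
      = ∫ t in (1:ℝ)..x, (s t).re * Real.sqrt (t ^ 2 - 1) := by
    rw [intervalIntegral.integral_of_le hx.le, intervalIntegral.integral_of_le hx.le,
      ← RCLike.re_eq_complex_re, ← integral_re hInt]
    simp only [RCLike.re_eq_complex_re]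
    apply MeasureTheory.integral_congr_ae
    filter_upwards with t
    simp [Complex.mul_re]
  rw [heq]
  exact h1
end
end
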